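/- For every integer p ≥ 1, every (pK₂ ∪ P₃)-free graph G satisfies χ(G) ≤ C(ω(G)+2p, 2p+1), where P₃ is the path on 3 vertices and C(a,b) denotes the binomial coefficient. -/

import Mathlib

/-!
Induction on `p`. For `p = 0` the graph is `P₃`-free, so each connected component is a clique
and `ω` colours suffice. For the step fix a maximum clique `e₀, …, e_{ω-1}`; every vertex misses
some `e_k`. The vertices adjacent to all `e_k` with `k ≠ j` form an independent set, since two
adjacent ones together with the clique minus `e_j` would form a clique of size `ω + 1`. Every
other vertex has two first non-neighbours `e_i, e_j` with `i < j`. The set `B_ij` of such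
vertices is anticomplete to the edge `e_i e_j`, so `G[B_ij]` contains no `(p-1)K₂ ∪ P₃`, and its
cliques extend by the `j - 1` vertices `e_k` (`k < j`, `k ≠ i`), so `ω(G[B_ij]) ≤ ω + 1 - j`.
Colouring all these classes with disjoint palettes uses
`∑_{j<ω} (1 + j · C(ω - j + 2p - 1, 2p - 1))` colours, which is `C(ω + 2p, 2p + 1)` by the hockey-stick identity.
-/

open SimpleGraph

/-- `pK₂`: the disjoint union of `p` copies of the single-edge graph `K₂`. -/
def pK2 (p : ℕ) : SimpleGraph (Fin p × Fin 2) where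
  Adj x y := x.1 = y.1 ∧ x.2 ≠ y.2
  symm := ⟨fun _ _ h => ⟨h.1.symm, h.2.symm⟩⟩
  loopless := ⟨fun _ h => h.2 rfl⟩

open Finset

namespace Nat

lemma sum_range_sub_add_choose (q n : ℕ) :
    ∑ j ∈ range n, (n - j + q + 1).choose (q + 1) + 1 = (n + q + 2).choose (q + 2) := by
  induction n with
  | zero => simp
  | succ n ih =>
    have h : (n + q + 3).choose (q + 2) = (n + q + 2).choose (q + 1) + (n + q + 2).choose (q + 2) :=
      choose_succ_succ' _ _
    rw [sum_range_succ', show n + 1 + q + 2 = n + q + 3 by ring, h, ← ih]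
    simp only [Nat.add_sub_add_right, Nat.sub_zero, show n + 1 + q + 1 = n + q + 2 by ring]
    ring

lemma sum_range_one_add_mul_choose (q n : ℕ) :
    ∑ j ∈ range n, (1 + j * (n - j + q + 1).choose (q + 1)) = (n + q + 2).choose (q + 3) := by
  induction n with
  | zero => simp
  | succ n ih =>
    have h : (n + q + 3).choose (q + 3) = (n + q + 2).choose (q + 2) + (n + q + 2).choose (q + 3) :=
      choose_succ_succ' _ _
    rw [sum_range_succ', show n + 1 + q + 2 = n + q + 3 by ring, h, ← ih,
      ← sum_range_sub_add_choose, add_right_comm _ 1, ← sum_add_distrib]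
    simp only [Nat.add_sub_add_right, Nat.sub_zero, zero_mul, add_zero]
    exact congrArg (· + 1) (sum_congr rfl fun j _ => by ring)

end Nat

namespace SimpleGraph

variable {V W₁ W₂ : Type*} {G : SimpleGraph V} {H₁ : SimpleGraph W₁} {H₂ : SimpleGraph W₂}

def Embedding.sumElim (f₁ : H₁ ↪g G) (f₂ : H₂ ↪g G) (hne : ∀ a b, f₁ a ≠ f₂ b)
    (hadj : ∀ a b, ¬G.Adj (f₁ a) (f₂ b)) : H₁ ⊕g H₂ ↪g G where
  toFun := Sum.elim f₁ f₂
  inj' := by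
    rintro (a | a) (b | b) h
    · exact congrArg _ (f₁.injective h)
    · exact absurd h (hne a b)
    · exact absurd h.symm (hne b a)
    · exact congrArg _ (f₂.injective h)
  map_rel_iff' := by
    rintro (a | a) (b | b)
    · exact f₁.map_adj_iff
    · exact iff_of_false (hadj a b) (not_adj_sum_inl_inr a b)
    · exact iff_of_false (fun h => hadj b a h.symm) (fun h => not_adj_sum_inl_inr b a h.symm)
    · exact f₂.map_adj_iff

def pK2AddIso (m n : ℕ) : pK2 (m + n) ≃g pK2 m ⊕g pK2 n where
  toEquiv := (Equiv.prodCongr finSumFinEquiv.symm (Equiv.refl _)).trans (Equiv.sumProdDistrib _ _ _)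
  map_rel_iff' := by
    rintro ⟨x, s⟩ ⟨y, t⟩
    obtain ⟨x, rfl⟩ := finSumFinEquiv.surjective x
    obtain ⟨y, rfl⟩ := finSumFinEquiv.surjective y
    rcases x with x | x <;> rcases y with y | y <;> simp [pK2, Fin.ext_iff] <;> omega

def pK2OneEmbedding {x y : V} (h : G.Adj x y) : pK2 1 ↪g G where
  toFun z := ![x, y] z.2
  inj' := by
    rintro ⟨a, s⟩ ⟨b, t⟩ hst
    fin_cases a; fin_cases b; fin_cases s <;> fin_cases t <;> simp_all [h.ne, h.ne.symm]
  map_rel_iff' := by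
    rintro ⟨a, s⟩ ⟨b, t⟩
    change G.Adj (![x, y] s) (![x, y] t) ↔ _
    fin_cases a; fin_cases b; fin_cases s <;> fin_cases t <;> simp [pK2, h, h.symm]

lemma adj_of_adj_of_adj (h : IsEmpty (pathGraph 3 ↪g G)) {a b c : V} (hab : G.Adj a b)
    (hac : G.Adj a c) (hbc : b ≠ c) : G.Adj b c := by
  by_contra hn
  have hinj : Function.Injective ![b, a, c] := by
    intro x y hxy
    fin_cases x <;> fin_cases y <;> simp_all [hab.ne, hac.ne, hab.ne.symm, hac.ne.symm]
  exact h.false ⟨⟨_, hinj⟩, fun {x y} => by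
    fin_cases x <;> fin_cases y <;>
      simp [pathGraph_adj, hab, hac, hab.symm, hac.symm, hn, mt Adj.symm hn]⟩

lemma adj_of_reachable (h : IsEmpty (pathGraph 3 ↪g G)) {u v : V} (huv : G.Reachable u v)
    (hne : u ≠ v) : G.Adj u v := by
  obtain ⟨w⟩ := huv
  induction w with
  | nil => exact absurd rfl hne
  | @cons u x v hux _ ih =>
    obtain rfl | hxv := eq_or_ne x v
    · exact hux
    · exact adj_of_adj_of_adj h hux.symm (ih hxv) hne

lemma colorable_cliqueNum_of_isEmpty_pathGraph_three [Finite V]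
    (h : IsEmpty (pathGraph 3 ↪g G)) : G.Colorable G.cliqueNum := by
  refine colorable_iff_forall_connectedComponent.2 fun c => ?_
  have := Fintype.ofFinite c.supp
  refine (colorable_of_fintype _).mono ?_
  have hc : G.IsClique (c.supp.toFinset : Set V) := fun u hu v hv hne =>
    adj_of_reachable h (c.reachable_of_mem_supp (by simpa using hu) (by simpa using hv)) hne
  exact (Set.toFinset_card c.supp).symm.trans_le hc.card_le_cliqueNum

lemma isEmpty_embedding_induce_of_anticomplete_adj {p : ℕ} {B : Set V} {x y : V}
    (hxy : G.Adj x y) (hB : ∀ u ∈ B, ¬G.Adj u x ∧ ¬G.Adj u y)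
    (hG : IsEmpty ((pK2 (p + 1) ⊕g pathGraph 3) ↪g G)) :
    IsEmpty ((pK2 p ⊕g pathGraph 3) ↪g G.induce B) := by
  refine ⟨fun F => hG.false ?_⟩
  let F' := (Embedding.induce B).comp F
  have hF' : ∀ b, F' b ∈ B := fun b => (F b).2
  have hxy' : ∀ a, pK2OneEmbedding hxy a = x ∨ pK2OneEmbedding hxy a = y := by
    rintro ⟨_, s⟩
    fin_cases s
    exacts [Or.inl rfl, Or.inr rfl]
  have hne : ∀ a b, pK2OneEmbedding hxy a ≠ F' b := by
    intro a b hab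
    obtain ⟨hbx, hby⟩ := hB _ (hF' b)
    rcases hxy' a with h | h <;> rw [h] at hab <;> subst hab
    exacts [hby hxy, hbx hxy.symm]
  have hadj : ∀ a b, ¬G.Adj (pK2OneEmbedding hxy a) (F' b) := by
    intro a b hab
    obtain ⟨hbx, hby⟩ := hB _ (hF' b)
    rcases hxy' a with h | h <;> rw [h] at hab
    exacts [hbx hab.symm, hby hab.symm]
  let iso : pK2 (p + 1) ⊕g pathGraph 3 ≃g pK2 1 ⊕g (pK2 p ⊕g pathGraph 3) :=
    ((pK2AddIso p 1).sumCongr .refl).trans ((Iso.sumComm.sumCongr .refl).trans Iso.sumAssoc)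
  exact (Embedding.sumElim _ F' hne hadj).comp iso.toRelEmbedding

section Clique

variable [Finite V] {K : Finset V}

lemma exists_not_adj_of_isNClique_cliqueNum (hK : G.IsNClique G.cliqueNum K) (u : V) :
    ∃ v ∈ K, ¬G.Adj u v := by
  classical
  by_contra! h
  have := (hK.insert h).isClique.card_le_cliqueNum
  rw [(hK.insert h).card_eq] at this
  omega

lemma not_adj_of_forall_adj_of_ne (hK : G.IsNClique G.cliqueNum K) {v a c : V} (hv : v ∈ K)
    (ha : ∀ w ∈ K, w ≠ v → G.Adj a w) (hc : ∀ w ∈ K, w ≠ v → G.Adj c w) : ¬G.Adj a c := by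
  classical
  intro hac
  have hK' := hK.insert_erase
    (fun w hw => ha w (mem_sdiff.1 hw).1 (by simpa using (mem_sdiff.1 hw).2)) hv
  obtain ⟨w, hw, hcw⟩ := exists_not_adj_of_isNClique_cliqueNum hK' c
  rcases mem_insert.1 hw with rfl | hw
  · exact hcw hac.symm
  · exact hcw (hc w (mem_of_mem_erase hw) (ne_of_mem_erase hw))

lemma cliqueNum_induce_add_card_le {B : Set V} {T : Finset V} (hT : G.IsClique (T : Set V))
    (hBT : ∀ u ∈ B, ∀ v ∈ T, G.Adj u v) : (G.induce B).cliqueNum + #T ≤ G.cliqueNum := by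
  classical
  obtain ⟨s, hs⟩ := (G.induce B).exists_isNClique_cliqueNum
  rw [isNClique_induce_iff] at hs
  have hsB : ∀ u ∈ s.map (.subtype _), u ∈ B := by
    intro u hu
    obtain ⟨u, -, rfl⟩ := mem_map.1 hu
    exact u.2
  have hdisj : Disjoint (s.map (.subtype _)) T :=
    Finset.disjoint_left.2 fun u hu huT => (hBT _ (hsB u hu) _ huT).ne rfl
  have hclique : G.IsClique ((s.map (.subtype _) ∪ T : Finset V) : Set V) := by
    rw [coe_union]
    refine Set.pairwise_union.2 ⟨hs.isClique, hT, fun u hu v hv _ => ?_⟩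
    have huv := hBT u (hsB u hu) v hv
    exact ⟨huv, huv.symm⟩
  have := hclique.card_le_cliqueNum
  rwa [card_union_of_disjoint hdisj, hs.card_eq] at this

end Clique

theorem colorable_sum_of_cover {ι : Type*} [Fintype ι] (S : ι → Set V) (n : ι → ℕ)
    (hS : ∀ v, ∃ t, v ∈ S t) (hcol : ∀ t, (G.induce (S t)).Colorable (n t)) :
    G.Colorable (∑ t, n t) := by
  choose t ht using hS
  let c := fun i => (hcol i).some
  let C : G.Coloring (Σ i, Fin (n i)) := Coloring.mk (fun v => ⟨t v, c (t v) ⟨v, ht v⟩⟩) <| by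
    intro u w huw hcol
    obtain ⟨htuw, hc⟩ := Sigma.mk.inj_iff.mp hcol
    have key : ∀ i j (hu : u ∈ S i) (hw : w ∈ S j), i = j → c i ⟨u, hu⟩ ≍ c j ⟨w, hw⟩ → False := by
      rintro i _ hu hw rfl h
      exact (c i).valid (v := ⟨u, hu⟩) (w := ⟨w, hw⟩) huw (eq_of_heq h)
    exact key _ _ _ _ htuw hc
  simpa using C.colorable

section NonAdjClass

variable {n : ℕ}

/-- For `i < j`, the class `⟨j, some i⟩` holds the vertices whose first two non-neighbours along
`e` are `e i` and `e j`. -/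
def nonAdjClass (G : SimpleGraph V) (e : Fin n → V) : (Σ j : Fin n, Option (Fin j)) → Set V
  | ⟨j, none⟩ => {u | ∀ k ≠ j, G.Adj u (e k)}
  | ⟨j, some i⟩ => {u | ¬G.Adj u (e (i.castLE j.isLt.le)) ∧ ¬G.Adj u (e j) ∧
      ∀ k < j, k ≠ i.castLE j.isLt.le → G.Adj u (e k)}

variable {e : Fin n ↪ V}

lemma isEmpty_embedding_induce_nonAdjClass_some {p : ℕ} (he : G.IsClique (Set.range e))
    (hG : IsEmpty ((pK2 (p + 1) ⊕g pathGraph 3) ↪g G)) (j : Fin n) (i : Fin j) :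
    IsEmpty ((pK2 p ⊕g pathGraph 3) ↪g G.induce (nonAdjClass G e ⟨j, some i⟩)) := by
  have hij : i.castLE j.isLt.le ≠ j := (show i.castLE j.isLt.le < j from i.isLt).ne
  exact isEmpty_embedding_induce_of_anticomplete_adj
    (he (Set.mem_range_self _) (Set.mem_range_self _) (e.injective.ne hij))
    (fun u hu => ⟨hu.1, hu.2.1⟩) hG

variable [Finite V]

lemma exists_mem_nonAdjClass (hK : G.IsNClique G.cliqueNum (univ.map e)) (u : V) :
    ∃ t, u ∈ nonAdjClass G e t := by
  classical
  let N : Finset (Fin n) := {k | ¬G.Adj u (e k)}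
  have hN : N.Nonempty := by
    obtain ⟨v, hv, huv⟩ := exists_not_adj_of_isNClique_cliqueNum hK u
    obtain ⟨k, -, rfl⟩ := mem_map.1 hv
    exact ⟨k, by simpa [N] using huv⟩
  have hi := N.min'_mem hN
  by_cases h2 : (N.erase (N.min' hN)).Nonempty
  · have hj := (N.erase (N.min' hN)).min'_mem h2
    have hij : N.min' hN < (N.erase (N.min' hN)).min' h2 :=
      (N.min'_le _ (mem_of_mem_erase hj)).lt_of_ne (ne_of_mem_erase hj).symm
    refine ⟨⟨_, some ⟨_, hij⟩⟩, by simpa [N] using hi, by simpa [N] using mem_of_mem_erase hj,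
      fun k hkj hki => ?_⟩
    by_contra huk
    exact (((N.erase _).min'_le k (mem_erase.2 ⟨hki, by simpa [N] using huk⟩)).trans_lt hkj).false
  · refine ⟨⟨N.min' hN, none⟩, fun k hk => ?_⟩
    by_contra huk
    exact h2 ⟨k, mem_erase.2 ⟨hk, by simpa [N] using huk⟩⟩

lemma colorable_one_induce_nonAdjClass_none (hK : G.IsNClique G.cliqueNum (univ.map e))
    (j : Fin n) : (G.induce (nonAdjClass G e ⟨j, none⟩)).Colorable 1 := by
  have hadj : ∀ a ∈ nonAdjClass G e ⟨j, none⟩, ∀ w ∈ univ.map e, w ≠ e j → G.Adj a w := by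
    rintro a ha _ hw hne
    obtain ⟨k, -, rfl⟩ := mem_map.1 hw
    exact ha k (ne_of_apply_ne e hne)
  exact ⟨Coloring.mk (fun _ => 0) fun {a c} hac _ =>
    not_adj_of_forall_adj_of_ne hK (mem_map_of_mem e (mem_univ j)) (hadj a a.2) (hadj c c.2) hac⟩

lemma cliqueNum_induce_nonAdjClass_some_add_le (he : G.IsClique (Set.range e)) (j : Fin n)
    (i : Fin j) : (G.induce (nonAdjClass G e ⟨j, some i⟩)).cliqueNum + j ≤ G.cliqueNum + 1 := by
  classical
  have hi : i.castLE j.isLt.le < j := i.isLt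
  let T : Finset V := ((Iio j).erase (i.castLE j.isLt.le)).map e
  have hT : #T + 1 = j := by
    rw [card_map, card_erase_add_one (mem_Iio.2 hi), Fin.card_Iio]
  have hTclique : G.IsClique (T : Set V) := he.subset (by simp [T])
  have hBT : ∀ u ∈ nonAdjClass G e ⟨j, some i⟩, ∀ v ∈ T, G.Adj u v := by
    rintro u ⟨-, -, hu⟩ v hv
    obtain ⟨k, hk, rfl⟩ := mem_map.1 hv
    exact hu k (mem_Iio.1 (mem_of_mem_erase hk)) (ne_of_mem_erase hk)
  have := cliqueNum_induce_add_card_le hTclique hBT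
  omega

end NonAdjClass

lemma exists_embedding_isNClique_cliqueNum {V : Type*} [Finite V] (G : SimpleGraph V) :
    ∃ (n : ℕ) (e : Fin n ↪ V), G.IsNClique G.cliqueNum (univ.map e) := by
  obtain ⟨K, hK⟩ := G.exists_isNClique_cliqueNum
  refine ⟨#K, K.equivFin.symm.toEmbedding.trans (.subtype _), ?_⟩
  rwa [← Finset.map_map, map_univ_equiv, univ_eq_attach, attach_map_val]

end SimpleGraph

open SimpleGraph

theorem colorable_choose_of_isEmpty_embedding {V : Type*} [Finite V] (p : ℕ) (G : SimpleGraph V)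
    (hG : IsEmpty ((pK2 p ⊕g pathGraph 3) ↪g G)) :
    G.Colorable ((G.cliqueNum + 2 * p).choose (2 * p + 1)) := by
  induction p generalizing V with
  | zero =>
    have hP3 : IsEmpty (pathGraph 3 ↪g G) := ⟨fun f => hG.false <|
      Embedding.sumElim (RelEmbedding.ofIsEmpty _ _) f (fun a => a.1.elim0) (fun a => a.1.elim0)⟩
    simpa using colorable_cliqueNum_of_isEmpty_pathGraph_three hP3
  | succ p ih =>
    obtain ⟨n, e, hK⟩ := G.exists_embedding_isNClique_cliqueNum
    have hn : G.cliqueNum = n := by simpa using hK.card_eq.symm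
    have he : G.IsClique (Set.range e) := by simpa using hK.isClique
    let b : ℕ → ℕ := fun j => (n - j + 2 * p + 1).choose (2 * p + 1)
    let colors : (Σ j : Fin n, Option (Fin j)) → ℕ := fun t => t.2.elim 1 fun _ => b t.1
    have hcount : ∑ t, colors t = (G.cliqueNum + 2 * (p + 1)).choose (2 * (p + 1) + 1) := by
      simp only [colors, Fintype.sum_sigma, Fintype.sum_option, Option.elim, sum_const,
        card_univ, Fintype.card_fin, smul_eq_mul]
      rw [Fin.sum_univ_eq_sum_range (fun j => 1 + j * b j), Nat.sum_range_one_add_mul_choose, hn]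
      ring_nf
    rw [← hcount]
    refine colorable_sum_of_cover _ colors (exists_mem_nonAdjClass hK) ?_
    rintro ⟨j, _ | i⟩
    · exact colorable_one_induce_nonAdjClass_none hK j
    · refine (ih _ (isEmpty_embedding_induce_nonAdjClass_some he hG j i)).mono
        (Nat.choose_le_choose _ ?_)
      have := cliqueNum_induce_nonAdjClass_some_add_le he j i
      have := j.isLt
      dsimp only [colors, b]
      omega

theorem stmt_11_general (p : ℕ) (V : Type) [Fintype V] (G : SimpleGraph V)
    (hG : IsEmpty ((pK2 p ⊕g pathGraph 3) ↪g G)) :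
    G.chromaticNumber ≤ (Nat.choose (G.cliqueNum + 2 * p) (2 * p + 1) : ℕ∞) :=
  (colorable_choose_of_isEmpty_embedding p G hG).chromaticNumber_le

theorem stmt_11 (p : ℕ) (hp : 1 ≤ p) (V : Type) [Fintype V] (G : SimpleGraph V)
    (hG : IsEmpty ((pK2 p ⊕g pathGraph 3) ↪g G)) :
    G.chromaticNumber ≤ (Nat.choose (G.cliqueNum + 2 * p) (2 * p + 1) : ℕ∞) :=
  stmt_11_general p V G hG
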